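/- arXiv:2602.23180 — 2 statements merged into one kernel-verified Lean document; each statement's English description precedes it below -/
import Mathlib

section
/- For each fixed t ∈ [0,1], the Hashin–Shtrikman upper-bound function v ↦ f^HS(t;v) is strictly increasing on [0,1]; its endpoint values are f^HS(t;0) = κ⁻·t² + μ⁻·(1 − t²) and f^HS(t;1) = κ⁺·t² + μ⁺·(1 − t²); consequently, for every real c with κ⁻·t² + μ⁻·(1 − t²) ≤ c ≤ κ⁺·t² + μ⁺·(1 − t²), there exists exactly one v ∈ [0,1] such that f^HS(t;v) = c. -/
open Real

/-- The square root `s = √(1 - t²)`. -/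
noncomputable def sHS (t : ℝ) : ℝ := Real.sqrt (1 - t ^ 2)

/-- The Hashin–Shtrikman correction term `q(t; v)` for two well-ordered isotropic
plane-stress phases with bulk moduli `κm < κp` and shear moduli `μm < μp`. -/
noncomputable def qHS (κm κp μm μp t v : ℝ) : ℝ :=
  if v * (κp - κm) * t ≤ (κp + μp - (κp - κm) * v) * sHS t ∧
     v * (μp - μm) * sHS t ≤ (κp + μp - (μp - μm) * v) * t then
    v * (1 - v) * ((κp - κm) * t - (μp - μm) * sHS t) ^ 2 /
      (κp + μp - ((κp - κm) + (μp - μm)) * v)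
  else if (κp + μp - (κp - κm) * v) * sHS t < v * (κp - κm) * t then
    (1 - v) * (v * (κp - κm) ^ 2 * t ^ 2 / (κp + μp - (κp - κm) * v)
      - (μp - μm) * (sHS t) ^ 2)
  else
    (1 - v) * (v * (μp - μm) ^ 2 * (sHS t) ^ 2 / (κp + μp - (μp - μm) * v)
      - (κp - κm) * t ^ 2)

/-- The Hashin–Shtrikman upper-bound function `f^HS(t; v)`:
the Voigt energy minus the correction `q(t; v)`. -/
noncomputable def fHS (κm κp μm μp t v : ℝ) : ℝ :=
  (κm + v * (κp - κm)) * t ^ 2 + (μm + v * (μp - μm)) * (1 - t ^ 2)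
    - qHS κm κp μm μp t v

/-!
Write `a = Δκ`, `b = Δμ`, `K = κ⁺ + μ⁺` and `s = √(1 - t²)`. On each of its three pieces,
`f^HS(t; ·)` is a constant plus `v ↦ v B - v (1 - v) E / (K - D v)` with `0 ≤ E ≤ D B`, and every
such function is strictly increasing on `v ≤ 1`. The correction is symmetric under
`(a, t) ↔ (b, s)`, so we may assume `b s ≤ a t`; then the third piece never occurs, and the first
piece gives way to the second exactly where `(K - a v) s = v a t`, and the two pieces agree there.
Hence `f^HS(t; ·)` is continuous and strictly increasing on `[0, 1]`, and the intermediate value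
theorem finishes the proof.
-/

open Set

lemma existsUnique_mem_Icc_eq_of_strictMonoOn {α δ : Type*} [ConditionallyCompleteLinearOrder α]
    [TopologicalSpace α] [OrderTopology α] [DenselyOrdered α] [LinearOrder δ] [TopologicalSpace δ]
    [OrderClosedTopology δ] {f : α → δ} {p q : α} {c : δ} (hpq : p ≤ q)
    (hf : StrictMonoOn f (Icc p q)) (hfc : ContinuousOn f (Icc p q)) (hc : c ∈ Icc (f p) (f q)) :
    ∃! v, v ∈ Icc p q ∧ f v = c := by
  obtain ⟨v, hv, rfl⟩ := intermediate_value_Icc hpq hfc hc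
  exact ⟨v, ⟨hv, rfl⟩, fun u hu => hf.injOn hu.1 hv hu.2⟩

lemma strictMonoOn_continuousOn_Icc_glue {f g h : ℝ → ℝ} {p q w : ℝ} (hpw : p ≤ w)
    (hg : StrictMonoOn g (Icc p q)) (hgc : ContinuousOn g (Icc p q))
    (hh : StrictMonoOn h (Icc p q)) (hhc : ContinuousOn h (Icc p q))
    (hfg : ∀ v ∈ Icc p q, v ≤ w → f v = g v) (hfh : ∀ v ∈ Icc p q, w < v → f v = h v)
    (hgh : w < q → g w = h w) :
    StrictMonoOn f (Icc p q) ∧ ContinuousOn f (Icc p q) := by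
  rcases le_or_gt q w with hqw | hwq
  · have hfg' : EqOn g f (Icc p q) := fun v hv => (hfg v hv (hv.2.trans hqw)).symm
    exact ⟨hg.congr hfg', hgc.congr hfg'.symm⟩
  have hfg' : EqOn g f (Icc p w) := fun v hv =>
    (hfg v ⟨hv.1, hv.2.trans hwq.le⟩ hv.2).symm
  have hfh' : EqOn h f (Icc w q) := by
    intro v hv
    rcases hv.1.eq_or_lt with hwv | hwv
    · rw [← hwv, hfg w ⟨hpw, hwq.le⟩ le_rfl, hgh hwq]
    · exact (hfh v ⟨hpw.trans hwv.le, hv.2⟩ hwv).symm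
  rw [← Icc_union_Icc_eq_Icc hpw hwq.le]
  exact ⟨((hg.mono (Icc_subset_Icc_right hwq.le)).congr hfg').union
      ((hh.mono (Icc_subset_Icc_left hpw)).congr hfh') (isGreatest_Icc hpw) (isLeast_Icc hwq.le),
    ((hgc.mono (Icc_subset_Icc_right hwq.le)).congr hfg'.symm).union_of_isClosed
      ((hhc.mono (Icc_subset_Icc_left hpw)).congr hfh'.symm) isClosed_Icc isClosed_Icc⟩

noncomputable def hsBranch (K D B E v : ℝ) : ℝ := v * B - v * (1 - v) * E / (K - D * v)

section Branch

variable {K D B E : ℝ}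

lemma hsBranch_eq_div {v : ℝ} (h : K - D * v ≠ 0) :
    hsBranch K D B E v = (v * B * (K - D * v) - v * (1 - v) * E) / (K - D * v) := by
  rw [hsBranch, eq_div_iff h, sub_mul, div_mul_cancel₀ _ h]

lemma hsBranch_sub_hsBranch {v₁ v₂ : ℝ} (h₁ : K - D * v₁ ≠ 0) (h₂ : K - D * v₂ ≠ 0) :
    hsBranch K D B E v₂ - hsBranch K D B E v₁ =
      (v₂ - v₁) * (B * ((K - D * v₁) * (K - D * v₂)) - E * (K * (1 - v₁ - v₂) + D * v₁ * v₂)) /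
        ((K - D * v₁) * (K - D * v₂)) := by
  rw [hsBranch_eq_div h₁, hsBranch_eq_div h₂, div_sub_div _ _ h₂ h₁, mul_comm (K - D * v₂)]
  ring

lemma hsBranch_strictMonoOn (hD : 0 ≤ D) (hDK : D < K) (hB : 0 < B) (hE : 0 ≤ E)
    (hEB : E ≤ D * B) : StrictMonoOn (hsBranch K D B E) (Iic 1) := by
  intro v₁ hv₁ v₂ hv₂ hv
  have hP₁ : 0 < K - D * v₁ := by nlinarith [mul_le_of_le_one_right hD hv₁]
  have hP₂ : 0 < K - D * v₂ := by nlinarith [mul_le_of_le_one_right hD hv₂]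
  set N := K * (1 - v₁ - v₂) + D * v₁ * v₂
  -- `(K - D v₁) (K - D v₂) - D N = K (K - D)`, so `E ≤ D B` leaves the numerator positive.
  have hnum : 0 < B * ((K - D * v₁) * (K - D * v₂)) - E * N := by
    rcases le_total N 0 with hN | hN
    · nlinarith [mul_pos hB (mul_pos hP₁ hP₂), mul_nonpos_of_nonneg_of_nonpos hE hN]
    · nlinarith [mul_pos hB (mul_pos (hD.trans_lt hDK) (sub_pos.mpr hDK)),
        mul_le_mul_of_nonneg_right hEB hN]
  rw [← sub_pos, hsBranch_sub_hsBranch hP₁.ne' hP₂.ne']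
  exact div_pos (mul_pos (sub_pos.mpr hv) hnum) (mul_pos hP₁ hP₂)

lemma hsBranch_continuousOn (hD : 0 ≤ D) (hDK : D < K) :
    ContinuousOn (hsBranch K D B E) (Iic 1) := by
  unfold hsBranch
  refine (continuous_id.mul continuous_const).continuousOn.sub
    (ContinuousOn.div (by fun_prop) (by fun_prop) fun v hv => ?_)
  nlinarith [mul_le_of_le_one_right hD hv]

end Branch

noncomputable def hsCorrection (a b K t s v : ℝ) : ℝ :=
  if v * a * t ≤ (K - a * v) * s ∧ v * b * s ≤ (K - b * v) * t then
    v * (1 - v) * (a * t - b * s) ^ 2 / (K - (a + b) * v)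
  else if (K - a * v) * s < v * a * t then
    (1 - v) * (v * a ^ 2 * t ^ 2 / (K - a * v) - b * s ^ 2)
  else
    (1 - v) * (v * b ^ 2 * s ^ 2 / (K - b * v) - a * t ^ 2)

noncomputable def hsIncrement (a b K t s v : ℝ) : ℝ :=
  v * (a * t ^ 2 + b * s ^ 2) - hsCorrection a b K t s v

section Increment

variable {a b K t s v : ℝ}

lemma hsCorrection_comm (ht : 0 ≤ t) (hs : 0 ≤ s) (hv : (a + b) * v ≤ K) :
    hsCorrection a b K t s v = hsCorrection b a K s t v := by
  -- The second and third branches exclude each other: together they give `v b s < v a t < v b s`.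
  have hexcl : (K - a * v) * s < v * a * t → ¬ (K - b * v) * t < v * b * s := fun h₂ h₃ => by
    nlinarith [mul_le_mul_of_nonneg_right (by linarith : b * v ≤ K - a * v) hs,
      mul_le_mul_of_nonneg_right (by linarith : a * v ≤ K - b * v) ht]
  unfold hsCorrection
  split_ifs <;> first | ring1 | grind

lemma hsIncrement_comm (ht : 0 ≤ t) (hs : 0 ≤ s) (hv : (a + b) * v ≤ K) :
    hsIncrement a b K t s v = hsIncrement b a K s t v := by
  rw [hsIncrement, hsIncrement, hsCorrection_comm ht hs hv, add_comm]

lemma hsIncrement_zero (hK : 0 ≤ K) (ht : 0 ≤ t) (hs : 0 ≤ s) : hsIncrement a b K t s 0 = 0 := by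
  simp [hsIncrement, hsCorrection, mul_nonneg hK hs, mul_nonneg hK ht]

lemma hsIncrement_one : hsIncrement a b K t s 1 = a * t ^ 2 + b * s ^ 2 := by
  rw [hsIncrement, hsCorrection]
  split_ifs <;> ring

lemma hsIncrement_eq_branch₁ (h₁ : v * a * t ≤ (K - a * v) * s) (h₂ : v * b * s ≤ (K - b * v) * t) :
    hsIncrement a b K t s v =
      hsBranch K (a + b) (a * t ^ 2 + b * s ^ 2) ((a * t - b * s) ^ 2) v := by
  rw [hsIncrement, hsCorrection, if_pos ⟨h₁, h₂⟩, hsBranch]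

lemma hsIncrement_eq_branch₂ (h : (K - a * v) * s < v * a * t) :
    hsIncrement a b K t s v = b * s ^ 2 + hsBranch K a (a * t ^ 2) (a ^ 2 * t ^ 2) v := by
  rw [hsIncrement, hsCorrection, if_neg fun h' => h.not_ge h'.1, if_pos h, hsBranch]
  ring

lemma hsBranch_eq_of_boundary (ha : 0 ≤ a) (hb : 0 ≤ b) (hK : a + b < K) (hv : v ≤ 1)
    (hbd : (K - a * v) * s = v * a * t) :
    hsBranch K (a + b) (a * t ^ 2 + b * s ^ 2) ((a * t - b * s) ^ 2) v =
      b * s ^ 2 + hsBranch K a (a * t ^ 2) (a ^ 2 * t ^ 2) v := by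
  have h₁ : K - a * v ≠ 0 := by nlinarith [mul_le_of_le_one_right ha hv]
  have h₂ : K - (a + b) * v ≠ 0 := by nlinarith [mul_le_of_le_one_right (add_nonneg ha hb) hv]
  have hdiff : b * s ^ 2 + hsBranch K a (a * t ^ 2) (a ^ 2 * t ^ 2) v -
      hsBranch K (a + b) (a * t ^ 2 + b * s ^ 2) ((a * t - b * s) ^ 2) v =
      (1 - v) * b * ((K - a * v) * s - v * a * t) ^ 2 / ((K - a * v) * (K - (a + b) * v)) := by
    rw [hsBranch_eq_div h₁, hsBranch_eq_div h₂, add_sub_assoc, div_sub_div _ _ h₁ h₂,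
      eq_div_iff (mul_ne_zero h₁ h₂), add_mul, div_mul_cancel₀ _ (mul_ne_zero h₁ h₂)]
    ring
  rw [hbd, sub_self] at hdiff
  simpa [sub_eq_zero, eq_comm] using hdiff

lemma hsIncrement_strictMonoOn_continuousOn_of_le (ha : 0 < a) (hb : 0 < b) (hK : a + b < K)
    (hs : 0 ≤ s) (hts : 0 < t + s) (hba : b * s ≤ a * t) :
    StrictMonoOn (hsIncrement a b K t s) (Icc 0 1) ∧
      ContinuousOn (hsIncrement a b K t s) (Icc 0 1) := by
  have ht' : 0 < t := by nlinarith
  have hK₀ : 0 ≤ K := by linarith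
  set w := K * s / (a * (t + s)) with hw_def
  have hw : ∀ v, v * a * t ≤ (K - a * v) * s ↔ v ≤ w := fun v => by
    rw [hw_def, le_div_iff₀ (by positivity)]
    constructor <;> intro h <;> linarith
  have hbranch₁ : StrictMonoOn
      (hsBranch K (a + b) (a * t ^ 2 + b * s ^ 2) ((a * t - b * s) ^ 2)) (Iic 1) :=
    hsBranch_strictMonoOn (by positivity) hK (by positivity) (sq_nonneg _)
      (by nlinarith [mul_nonneg (mul_nonneg ha.le hb.le) (sq_nonneg (t + s))])
  have hbranch₂ : StrictMonoOn (hsBranch K a (a * t ^ 2) (a ^ 2 * t ^ 2)) (Iic 1) :=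
    hsBranch_strictMonoOn ha.le (by linarith) (by positivity) (by positivity)
      (le_of_eq (by ring))
  refine strictMonoOn_continuousOn_Icc_glue (div_nonneg (mul_nonneg hK₀ hs) (by positivity))
    (hbranch₁.mono Icc_subset_Iic_self)
    ((hsBranch_continuousOn (by positivity) hK).mono Icc_subset_Iic_self)
    ((hbranch₂.const_add _).mono Icc_subset_Iic_self)
    ((continuousOn_const.add (hsBranch_continuousOn ha.le (by linarith))).mono Icc_subset_Iic_self)
    (fun v _ hv => hsIncrement_eq_branch₁ ((hw v).2 hv) ?_)
    (fun v _ hv => hsIncrement_eq_branch₂ (not_le.1 (mt (hw v).1 hv.not_ge)))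
    (fun hw₁ => hsBranch_eq_of_boundary ha.le hb.le hK hw₁.le ?_)
  · have h₁ := (hw v).2 hv
    have : a * (v * b * s) ≤ a * ((K - b * v) * t) := by
      nlinarith [mul_le_mul_of_nonneg_left h₁ hb.le, mul_le_mul_of_nonneg_left hba hK₀]
    exact le_of_mul_le_mul_left this ha
  · have : w * (a * (t + s)) = K * s := div_mul_cancel₀ _ (by positivity)
    linear_combination -this

lemma hsIncrement_strictMonoOn_continuousOn (ha : 0 < a) (hb : 0 < b) (hK : a + b < K)
    (ht : 0 ≤ t) (hs : 0 ≤ s) (hts : 0 < t + s) :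
    StrictMonoOn (hsIncrement a b K t s) (Icc 0 1) ∧
      ContinuousOn (hsIncrement a b K t s) (Icc 0 1) := by
  rcases le_total (b * s) (a * t) with hba | hab
  · exact hsIncrement_strictMonoOn_continuousOn_of_le ha hb hK hs hts hba
  have hswap : EqOn (hsIncrement b a K s t) (hsIncrement a b K t s) (Icc 0 1) := fun v hv =>
    (hsIncrement_comm ht hs (by nlinarith [mul_le_of_le_one_right (add_pos ha hb).le hv.2])).symm
  obtain ⟨hmono, hcont⟩ :=
    hsIncrement_strictMonoOn_continuousOn_of_le hb ha (by linarith : b + a < K) ht (by linarith) hab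
  exact ⟨hmono.congr hswap, hcont.congr hswap.symm⟩

end Increment

lemma sHS_sq {t : ℝ} (ht : t ^ 2 ≤ 1) : sHS t ^ 2 = 1 - t ^ 2 := Real.sq_sqrt (by linarith)

lemma fHS_eq_hsIncrement {κm κp μm μp t v : ℝ} (ht : t ^ 2 ≤ 1) :
    fHS κm κp μm μp t v = κm * t ^ 2 + μm * (1 - t ^ 2) +
      hsIncrement (κp - κm) (μp - μm) (κp + μp) t (sHS t) v := by
  have hq : qHS κm κp μm μp t v = hsCorrection (κp - κm) (μp - μm) (κp + μp) t (sHS t) v := rfl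
  rw [fHS, hsIncrement, hq, sHS_sq ht]
  ring

/-- For each fixed `t ∈ [0,1]`, `v ↦ f^HS(t;v)` is strictly increasing on `[0,1]`,
its endpoint values are the pure-phase energies, and consequently every value
`c` between the endpoint energies is attained by exactly one `v ∈ [0,1]`. -/
theorem hs_upper_bound_strictMonoOn_endpoints_existsUnique
    (κm κp μm μp : ℝ) (hκm : 0 < κm) (hκ : κm < κp) (hμm : 0 < μm) (hμ : μm < μp)
    (t : ℝ) (ht : t ∈ Set.Icc (0 : ℝ) 1) :
    StrictMonoOn (fun v => fHS κm κp μm μp t v) (Set.Icc (0 : ℝ) 1) ∧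
    fHS κm κp μm μp t 0 = κm * t ^ 2 + μm * (1 - t ^ 2) ∧
    fHS κm κp μm μp t 1 = κp * t ^ 2 + μp * (1 - t ^ 2) ∧
    ∀ c : ℝ, κm * t ^ 2 + μm * (1 - t ^ 2) ≤ c → c ≤ κp * t ^ 2 + μp * (1 - t ^ 2) →
      ∃! v : ℝ, v ∈ Set.Icc (0 : ℝ) 1 ∧ fHS κm κp μm μp t v = c := by
  obtain ⟨ht₀, ht₁⟩ := ht
  have ht₂ : t ^ 2 ≤ 1 := by nlinarith
  have hs₀ : 0 ≤ sHS t := Real.sqrt_nonneg _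
  have hts : 0 < t + sHS t := by nlinarith [sHS_sq ht₂, mul_nonneg ht₀ hs₀]
  have hf : (fun v => fHS κm κp μm μp t v) = fun v => κm * t ^ 2 + μm * (1 - t ^ 2) +
      hsIncrement (κp - κm) (μp - μm) (κp + μp) t (sHS t) v :=
    funext fun v => fHS_eq_hsIncrement ht₂
  obtain ⟨hmono, hcont⟩ := hsIncrement_strictMonoOn_continuousOn (sub_pos.2 hκ) (sub_pos.2 hμ)
    (by linarith : κp - κm + (μp - μm) < κp + μp) ht₀ hs₀ hts
  have hfmono : StrictMonoOn (fun v => fHS κm κp μm μp t v) (Icc 0 1) := hf ▸ hmono.const_add _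
  have hfcont : ContinuousOn (fun v => fHS κm κp μm μp t v) (Icc 0 1) :=
    hf ▸ continuousOn_const.add hcont
  have hf₀ : fHS κm κp μm μp t 0 = κm * t ^ 2 + μm * (1 - t ^ 2) := by
    rw [fHS_eq_hsIncrement ht₂, hsIncrement_zero (by linarith) ht₀ hs₀, add_zero]
  have hf₁ : fHS κm κp μm μp t 1 = κp * t ^ 2 + μp * (1 - t ^ 2) := by
    rw [fHS_eq_hsIncrement ht₂, hsIncrement_one, sHS_sq ht₂]
    ring
  refine ⟨hfmono, hf₀, hf₁, fun c hc₀ hc₁ => ?_⟩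
  exact existsUnique_mem_Icc_eq_of_strictMonoOn zero_le_one hfmono hfcont (hf₀ ▸ hf₁ ▸ ⟨hc₀, hc₁⟩)
end

section
/- The convex hull of the Hashin–Shtrikman feasible set equals the Voigt feasible set: in the product space of volume fractions and Kelvin–Mandel elasticity matrices, convexHull(F_HS) = F_V. -/
/-!
Since `q ≥ 0`, the bound `f^HS(t; v)` lies below `κ_v t² + μ_v (1 - t²)`, the energy on the
sphere of the isotropic tensor `M(κ_v, μ_v) = (1 - v) M(κ⁻, μ⁻) + v M(κ⁺, μ⁺)`; by homogeneity this
gives `F_HS ⊆ F_V`, and `F_V` is convex, being cut out by Loewner inequalities affine in `(v, A)`.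
Conversely `q` vanishes at `v = 0` and `v = 1`, so these slices of `F_HS` are the full Loewner
intervals `[M(κ⁻, μ⁻), M(κ⁻, μ⁻)]` and `[M(κ⁻, μ⁻), M(κ⁺, μ⁺)]`, and every `(v, A) ∈ F_V` with
`v > 0` is the mixture `(1 - v) (0, M(κ⁻, μ⁻)) + v (1, M(κ⁻, μ⁻) + (A - M(κ⁻, μ⁻)) / v)` of two such
points.
-/

open Real

open Matrix

/-- Kelvin–Mandel matrix of the isotropic plane-stress elasticity tensor with
bulk modulus `κ` and shear modulus `μ`. -/
noncomputable def KM (κ μ : ℝ) : Matrix (Fin 3) (Fin 3) ℝ :=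
  !![κ + μ, κ - μ, 0; κ - μ, κ + μ, 0; 0, 0, 2 * μ]

/-- The Hashin–Shtrikman feasible set in the product space of volume fractions
and Kelvin–Mandel elasticity matrices. -/
noncomputable def FHS (κm κp μm μp : ℝ) : Set (ℝ × Matrix (Fin 3) (Fin 3) ℝ) :=
  {p | p.1 ∈ Set.Icc (0 : ℝ) 1 ∧ p.2.IsSymm ∧ (p.2 - KM κm μm).PosSemidef ∧
    ∀ e : Fin 3 → ℝ, (e 0) ^ 2 + (e 1) ^ 2 + (e 2) ^ 2 = 1 / 2 →
      dotProduct e (p.2.mulVec e) ≤ fHS κm κp μm μp (abs (e 0 + e 1)) p.1}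

/-- The Voigt feasible set in the product space of volume fractions and
Kelvin–Mandel elasticity matrices. -/
noncomputable def FV (κm κp μm μp : ℝ) : Set (ℝ × Matrix (Fin 3) (Fin 3) ℝ) :=
  {p | p.1 ∈ Set.Icc (0 : ℝ) 1 ∧ p.2.IsSymm ∧ (p.2 - KM κm μm).PosSemidef ∧
    ((1 - p.1) • KM κm μm + p.1 • KM κp μp - p.2).PosSemidef}


section Correction

variable {κm κp μm μp v : ℝ}

/-- Nonnegativity of each one-sided branch of `qHS`: `a, b` are the modulus gaps, `(x, y)` is
`(t, s)` or `(s, t)`, and `d` is the matching denominator. -/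
lemma mul_sq_le_div_of_mul_lt {a b x y d : ℝ} (hv : 0 ≤ v) (hb : 0 ≤ b) (hy : 0 ≤ y)
    (hd : 0 < d) (hvb : v * b ≤ d) (hlt : d * y < v * a * x) :
    b * y ^ 2 ≤ v * a ^ 2 * x ^ 2 / d := by
  have hsq : (d * y) ^ 2 ≤ (v * a * x) ^ 2 := pow_le_pow_left₀ (by positivity) hlt.le 2
  rw [le_div_iff₀ hd]
  refine le_of_mul_le_mul_right ?_ hd
  calc b * y ^ 2 * d * d = b * (d * y) ^ 2 := by ring
    _ ≤ b * (v * a * x) ^ 2 := mul_le_mul_of_nonneg_left hsq hb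
    _ = v * b * (v * a ^ 2 * x ^ 2) := by ring
    _ ≤ d * (v * a ^ 2 * x ^ 2) := by gcongr
    _ = v * a ^ 2 * x ^ 2 * d := by ring

lemma qHS_nonneg {t : ℝ} (hκ : κm ≤ κp) (hμ : μm ≤ μp) (hm : 0 < κm + μm) (ht : 0 ≤ t)
    (hv₀ : 0 ≤ v) (hv₁ : v ≤ 1) : 0 ≤ qHS κm κp μm μp t v := by
  have hs : 0 ≤ sHS t := Real.sqrt_nonneg _
  have hd₁ : 0 < κp + μp - ((κp - κm) + (μp - μm)) * v := by nlinarith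
  unfold qHS
  split_ifs with hin hκbranch
  · positivity
  · exact mul_nonneg (by linarith) <| sub_nonneg.2 <|
      mul_sq_le_div_of_mul_lt hv₀ (by linarith) hs (by nlinarith) (by linarith) hκbranch
  · have hμbranch : (κp + μp - (μp - μm) * v) * t < v * (μp - μm) * sHS t := by
      by_contra! h
      exact hin ⟨not_lt.1 hκbranch, h⟩
    exact mul_nonneg (by linarith) <| sub_nonneg.2 <|
      mul_sq_le_div_of_mul_lt hv₀ (by linarith) ht (by nlinarith) (by linarith) hμbranch

lemma fHS_zero {t : ℝ} (hp : 0 ≤ κp + μp) (ht : 0 ≤ t) :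
    fHS κm κp μm μp t 0 = κm * t ^ 2 + μm * (1 - t ^ 2) := by
  have hs : 0 ≤ sHS t := Real.sqrt_nonneg _
  rw [fHS, qHS, if_pos (by simp only [zero_mul, mul_zero, sub_zero]; constructor <;> positivity)]
  ring

lemma fHS_one (t : ℝ) : fHS κm κp μm μp t 1 = κp * t ^ 2 + μp * (1 - t ^ 2) := by
  rw [fHS, qHS]
  split_ifs <;> ring

end Correction

lemma KM_isSymm (κ μ : ℝ) : (KM κ μ).IsSymm := by
  ext i j
  fin_cases i <;> fin_cases j <;> rfl

lemma isSymm_of_posSemidef_sub_KM {A : Matrix (Fin 3) (Fin 3) ℝ} {κ μ : ℝ}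
    (h : (A - KM κ μ).PosSemidef) : A.IsSymm := by
  simpa using (isHermitian_iff_isSymm.1 h.isHermitian).add (KM_isSymm κ μ)

lemma smul_KM_add_smul_KM (a b κ μ κ' μ' : ℝ) :
    a • KM κ μ + b • KM κ' μ' = KM (a * κ + b * κ') (a * μ + b * μ') := by
  ext i j
  fin_cases i <;> fin_cases j <;> simp [KM] <;> ring

lemma dotProduct_KM_mulVec (κ μ : ℝ) (e : Fin 3 → ℝ) :
    e ⬝ᵥ KM κ μ *ᵥ e = κ * (e 0 + e 1) ^ 2 + μ * ((e 0 - e 1) ^ 2 + 2 * e 2 ^ 2) := by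
  simp [KM, dotProduct, mulVec, Fin.sum_univ_three]
  ring

lemma dotProduct_KM_mulVec_of_sphere (κ μ : ℝ) {e : Fin 3 → ℝ}
    (he : e 0 ^ 2 + e 1 ^ 2 + e 2 ^ 2 = 1 / 2) :
    e ⬝ᵥ KM κ μ *ᵥ e = κ * |e 0 + e 1| ^ 2 + μ * (1 - |e 0 + e 1| ^ 2) := by
  rw [dotProduct_KM_mulVec, sq_abs]
  linear_combination (2 * μ) * he

lemma Matrix.PosSemidef.dotProduct_mulVec_le {n : Type*} [Fintype n] {A B : Matrix n n ℝ}
    (h : (B - A).PosSemidef) (x : n → ℝ) : x ⬝ᵥ A *ᵥ x ≤ x ⬝ᵥ B *ᵥ x := by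
  simpa [sub_mulVec] using h.dotProduct_mulVec_nonneg x

lemma Matrix.posSemidef_of_nonneg_on_sphere {n : Type*} [Fintype n] {M : Matrix n n ℝ}
    (hM : M.IsSymm) {r : ℝ} (hr : 0 < r) (h : ∀ x, x ⬝ᵥ x = r → 0 ≤ x ⬝ᵥ M *ᵥ x) :
    M.PosSemidef := by
  refine .of_dotProduct_mulVec_nonneg (isHermitian_iff_isSymm.2 hM) fun x => ?_
  rw [star_trivial]
  rcases eq_or_ne x 0 with rfl | hx
  · simp
  have hxx : 0 < x ⬝ᵥ x := dotProduct_self_star_pos_iff.2 hx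
  set c := √(r / x ⬝ᵥ x)
  have hc : c ^ 2 = r / x ⬝ᵥ x := Real.sq_sqrt (by positivity)
  have hcx : (c • x) ⬝ᵥ (c • x) = r := by
    rw [smul_dotProduct, dotProduct_smul, smul_smul, smul_eq_mul, ← sq, hc]
    field_simp
  have := h _ hcx
  rw [mulVec_smul, smul_dotProduct, dotProduct_smul, smul_smul, smul_eq_mul, ← sq, hc] at this
  exact (mul_nonneg_iff_of_pos_left (by positivity)).1 this

lemma dotProduct_self_fin_three (e : Fin 3 → ℝ) : e ⬝ᵥ e = e 0 ^ 2 + e 1 ^ 2 + e 2 ^ 2 := by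
  simp [dotProduct, Fin.sum_univ_three, sq]

section FeasibleSets

variable {κm κp μm μp : ℝ}

lemma FHS_subset_FV (hκ : κm ≤ κp) (hμ : μm ≤ μp) (hm : 0 < κm + μm) :
    FHS κm κp μm μp ⊆ FV κm κp μm μp := by
  rintro ⟨v, A⟩ ⟨hv, hA, hlo, hbound⟩
  refine ⟨hv, hA, hlo, ?_⟩
  rw [smul_KM_add_smul_KM]
  refine posSemidef_of_nonneg_on_sphere ((KM_isSymm _ _).sub hA) (by norm_num : (0 : ℝ) < 1 / 2)
    fun e he => ?_
  rw [dotProduct_self_fin_three] at he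
  have hq := qHS_nonneg (t := |e 0 + e 1|) hκ hμ hm (abs_nonneg _) hv.1 hv.2
  have hle := hbound e he
  rw [sub_mulVec, dotProduct_sub, sub_nonneg, dotProduct_KM_mulVec_of_sphere _ _ he]
  rw [fHS] at hle
  linear_combination hle + hq

lemma convex_FV : Convex ℝ (FV κm κp μm μp) := by
  rintro ⟨u, P⟩ ⟨hu, -, hPlo, hPhi⟩ ⟨w, Q⟩ ⟨hw, -, hQlo, hQhi⟩ a b ha hb hab
  dsimp only at hu hPlo hPhi hw hQlo hQhi
  have hlo : (a • P + b • Q - KM κm μm).PosSemidef := by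
    convert (hPlo.smul ha).add (hQlo.smul hb) using 1
    linear_combination (norm := module) hab • KM κm μm
  refine ⟨convex_Icc 0 1 hu hw ha hb hab, isSymm_of_posSemidef_sub_KM hlo, hlo, ?_⟩
  convert (hPhi.smul ha).add (hQhi.smul hb) using 1
  dsimp only [Prod.fst_add, Prod.snd_add, Prod.smul_fst, Prod.smul_snd, smul_eq_mul]
  linear_combination (norm := module) (-hab) • KM κm μm

lemma mem_FHS_of_posSemidef {v κ μ : ℝ} {A : Matrix (Fin 3) (Fin 3) ℝ} (hv : v ∈ Set.Icc 0 1)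
    (hlo : (A - KM κm μm).PosSemidef) (hhi : (KM κ μ - A).PosSemidef)
    (hf : ∀ t, 0 ≤ t → fHS κm κp μm μp t v = κ * t ^ 2 + μ * (1 - t ^ 2)) :
    (v, A) ∈ FHS κm κp μm μp := by
  refine ⟨hv, isSymm_of_posSemidef_sub_KM hlo, hlo, fun e he => ?_⟩
  rw [hf _ (abs_nonneg _), ← dotProduct_KM_mulVec_of_sphere κ μ he]
  exact hhi.dotProduct_mulVec_le e

lemma FV_subset_convexHull_FHS (hp : 0 ≤ κp + μp) :
    FV κm κp μm μp ⊆ convexHull ℝ (FHS κm κp μm μp) := by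
  rintro ⟨v, A⟩ ⟨hv, -, hlo, hhi⟩
  dsimp only at hv hlo hhi
  have mem_zero {A'} (hlo : (A' - KM κm μm).PosSemidef) (hhi : (KM κm μm - A').PosSemidef) :
      ((0 : ℝ), A') ∈ FHS κm κp μm μp :=
    mem_FHS_of_posSemidef ⟨le_rfl, zero_le_one⟩ hlo hhi fun _ ht => fHS_zero hp ht
  rcases hv.1.eq_or_lt with rfl | hv₀
  · exact subset_convexHull ℝ _ (mem_zero hlo (by simpa using hhi))
  set B := KM κm μm + v⁻¹ • (A - KM κm μm)
  have hB : ((1 : ℝ), B) ∈ FHS κm κp μm μp := by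
    refine mem_FHS_of_posSemidef ⟨zero_le_one, le_rfl⟩ ?_ ?_ fun t _ => fHS_one t
    · simpa [B] using hlo.smul (inv_nonneg.2 hv₀.le)
    · convert hhi.smul (inv_nonneg.2 hv₀.le) using 1
      simp only [B, smul_sub, smul_add, smul_smul, mul_sub, mul_one, inv_mul_cancel₀ hv₀.ne']
      module
  have hK : ((0 : ℝ), KM κm μm) ∈ FHS κm κp μm μp := by
    apply mem_zero <;> simpa using PosSemidef.zero
  have hsplit :
      ((v, A) : ℝ × Matrix (Fin 3) (Fin 3) ℝ) = (1 - v) • (0, KM κm μm) + v • (1, B) := by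
    refine Prod.ext (by simp) ?_
    simp only [Prod.snd_add, Prod.smul_snd, B, smul_add, smul_smul, mul_inv_cancel₀ hv₀.ne']
    module
  rw [hsplit]
  exact convex_convexHull ℝ _ (subset_convexHull ℝ _ hK) (subset_convexHull ℝ _ hB)
    (by linarith [hv.2]) hv₀.le (by ring)

end FeasibleSets

/-- The convex hull of the Hashin–Shtrikman feasible set equals the Voigt
feasible set. -/
theorem hs_convex_hull_eq_voigt
    (κm κp μm μp : ℝ) (hκm : 0 < κm) (hκ : κm < κp) (hμm : 0 < μm) (hμ : μm < μp) :
    convexHull ℝ (FHS κm κp μm μp) = FV κm κp μm μp :=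
  (convexHull_min (FHS_subset_FV hκ.le hμ.le (by linarith)) convex_FV).antisymm
    (FV_subset_convexHull_FHS (by linarith))
end
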